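/- arXiv:math/0101053 — 2 statements merged into one kernel-verified Lean document; each statement's English description precedes it below -/
import Mathlib

section
/- Every element of the braid group Bₙ can be written in the form Δₙ^r · P where r is an integer and P is a positive braid word (a product of generators σᵢ with only positive exponents). -/
def braidRels (m : ℕ) : Set (FreeGroup (Fin m)) :=
  {r | (∃ i j : Fin m, i.val + 2 ≤ j.val ∧
        r = FreeGroup.of i * FreeGroup.of j * (FreeGroup.of i)⁻¹ * (FreeGroup.of j)⁻¹) ∨
       (∃ i j : Fin m, j.val = i.val + 1 ∧
        r = FreeGroup.of i * FreeGroup.of j * FreeGroup.of i *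
            (FreeGroup.of j * FreeGroup.of i * FreeGroup.of j)⁻¹)}

abbrev BraidGroup (n : ℕ) := PresentedGroup (braidRels (n - 1))

def braidGen {n : ℕ} (i : Fin (n - 1)) : BraidGroup n := PresentedGroup.of i

def deltaFree (m : ℕ) : FreeGroup (Fin m) :=
  (List.ofFn (fun k : Fin m =>
    (List.ofFn (fun j : Fin (k.val + 1) =>
      FreeGroup.of (⟨k.val - j.val, Nat.lt_of_le_of_lt (Nat.sub_le _ _) k.isLt⟩ : Fin m))).prod)).prod

def braidDelta (n : ℕ) : BraidGroup n := PresentedGroup.mk (braidRels (n - 1)) (deltaFree (n - 1))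

namespace BraidAux

/-- `sg n i` is the `i`-th generator, or `1` if out of range. -/
def sg (n : ℕ) (i : ℕ) : BraidGroup n :=
  if h : i < n - 1 then braidGen ⟨i, h⟩ else 1

lemma braidRels_one {n : ℕ} {r : FreeGroup (Fin (n - 1))} (hr : r ∈ braidRels (n - 1)) :
    PresentedGroup.mk (braidRels (n - 1)) r = 1 :=
  (QuotientGroup.eq_one_iff r).2 (Subgroup.subset_normalClosure hr)

lemma gen_comm {n : ℕ} (a b : Fin (n - 1)) (h : a.val + 2 ≤ b.val) :
    braidGen (n := n) a * braidGen b = braidGen b * braidGen a := by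
  have h1 := braidRels_one (n := n) (Or.inl ⟨a, b, h, rfl⟩)
  rw [map_mul, map_mul, map_inv, map_inv, map_mul] at h1
  rw [mul_inv_eq_one, mul_inv_eq_iff_eq_mul] at h1
  exact h1

lemma gen_braid {n : ℕ} (a b : Fin (n - 1)) (h : b.val = a.val + 1) :
    braidGen (n := n) a * braidGen b * braidGen a
      = braidGen b * braidGen a * braidGen b := by
  have h1 := braidRels_one (n := n) (Or.inr ⟨a, b, h, rfl⟩)
  rw [map_mul, map_inv, map_mul, map_mul, map_mul, map_mul] at h1
  rw [mul_inv_eq_one] at h1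
  exact h1

lemma sg_comm {n : ℕ} {i j : ℕ} (h : i + 2 ≤ j) :
    sg n i * sg n j = sg n j * sg n i := by
  by_cases hj : j < n - 1
  · have hi : i < n - 1 := by omega
    simp only [sg, dif_pos hj, dif_pos hi]
    exact gen_comm ⟨i, hi⟩ ⟨j, hj⟩ h
  · simp [sg, dif_neg hj]

lemma sg_braid {n : ℕ} {i : ℕ} (h : i + 1 < n - 1) :
    sg n i * sg n (i + 1) * sg n i = sg n (i + 1) * sg n i * sg n (i + 1) := by
  have hi : i < n - 1 := by omega
  simp only [sg, dif_pos h, dif_pos hi]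
  exact gen_braid ⟨i, hi⟩ ⟨i + 1, h⟩ rfl

lemma sg_pos {n : ℕ} (i : ℕ) :
    sg n i ∈ Submonoid.closure (Set.range (braidGen (n := n))) := by
  unfold sg
  split
  · exact Submonoid.subset_closure ⟨_, rfl⟩
  · exact one_mem _

lemma braidGen_eq_sg {n : ℕ} (a : Fin (n - 1)) : braidGen (n := n) a = sg n a.val := by
  simp [sg, dif_pos a.isLt]

/-- Descending run `σ_k σ_{k-1} ⋯ σ_0`. -/
def DD (n : ℕ) : ℕ → BraidGroup n
  | 0 => sg n 0
  | k + 1 => sg n (k + 1) * DD n k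

/-- Descending run without the last letter: `σ_k ⋯ σ_1`. -/
def EE (n : ℕ) : ℕ → BraidGroup n
  | 0 => 1
  | k + 1 => sg n (k + 1) * EE n k

/-- Ascending run `σ_0 σ_1 ⋯ σ_k`. -/
def AA (n : ℕ) : ℕ → BraidGroup n
  | 0 => sg n 0
  | k + 1 => AA n k * sg n (k + 1)

/-- `Del n k = D_0 D_1 ⋯ D_{k-1}`, the Garside element on the first `k` generators. -/
def Del (n : ℕ) : ℕ → BraidGroup n
  | 0 => 1
  | k + 1 => Del n k * DD n k

lemma DD_eq_EE {n : ℕ} : ∀ k, DD n k = EE n k * sg n 0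
  | 0 => by simp [DD, EE]
  | k + 1 => by rw [DD, EE, DD_eq_EE k, mul_assoc]

lemma DD_pos {n : ℕ} : ∀ k, DD n k ∈ Submonoid.closure (Set.range (braidGen (n := n)))
  | 0 => sg_pos 0
  | k + 1 => mul_mem (sg_pos _) (DD_pos k)

lemma EE_pos {n : ℕ} : ∀ k, EE n k ∈ Submonoid.closure (Set.range (braidGen (n := n)))
  | 0 => one_mem _
  | k + 1 => mul_mem (sg_pos _) (EE_pos k)

lemma Del_pos {n : ℕ} : ∀ k, Del n k ∈ Submonoid.closure (Set.range (braidGen (n := n)))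
  | 0 => one_mem _
  | k + 1 => mul_mem (Del_pos k) (DD_pos k)

lemma Dcomm {n : ℕ} : ∀ k j, k + 2 ≤ j → sg n j * DD n k = DD n k * sg n j
  | 0, j, h => (sg_comm (by omega)).symm
  | k + 1, j, h => by
    show sg n j * (sg n (k + 1) * DD n k) = sg n (k + 1) * DD n k * sg n j
    rw [← mul_assoc, ← sg_comm (show k + 1 + 2 ≤ j by omega), mul_assoc,
      Dcomm k j (by omega), ← mul_assoc]

lemma Acomm {n : ℕ} : ∀ k j, k + 2 ≤ j → sg n j * AA n k = AA n k * sg n j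
  | 0, j, h => (sg_comm (by omega)).symm
  | k + 1, j, h => by
    show sg n j * (AA n k * sg n (k + 1)) = AA n k * sg n (k + 1) * sg n j
    rw [← mul_assoc, Acomm k j (by omega), mul_assoc,
      ← sg_comm (show k + 1 + 2 ≤ j by omega), ← mul_assoc]

lemma DelComm {n : ℕ} : ∀ k j, k + 1 ≤ j → sg n j * Del n k = Del n k * sg n j
  | 0, j, _ => by simp [Del]
  | k + 1, j, h => by
    show sg n j * (Del n k * DD n k) = Del n k * DD n k * sg n j
    rw [← mul_assoc, DelComm k j (by omega), mul_assoc, Dcomm k j (by omega), ← mul_assoc]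

/-- Key lemma: for `i < k`, `σ_i · D_k = D_k · σ_{i+1}`. -/
lemma sD {n : ℕ} : ∀ k, k < n - 1 → ∀ i, i < k → sg n i * DD n k = DD n k * sg n (i + 1)
  | 0, _, i, hi => absurd hi (by omega)
  | k + 1, hk, i, hi => by
    rcases Nat.lt_or_ge i k with hik | hik
    · -- i < k
      show sg n i * (sg n (k + 1) * DD n k) = sg n (k + 1) * DD n k * sg n (i + 1)
      rw [← mul_assoc, sg_comm (show i + 2 ≤ k + 1 by omega), mul_assoc,
        sD k (by omega) i hik, ← mul_assoc]
    · -- i = k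
      have hik : i = k := by omega
      subst hik
      cases i with
      | zero =>
        show sg n 0 * (sg n 1 * sg n 0) = sg n 1 * sg n 0 * sg n 1
        rw [← mul_assoc]
        exact sg_braid (by omega)
      | succ j =>
        show sg n (j + 1) * (sg n (j + 2) * (sg n (j + 1) * DD n j))
          = sg n (j + 2) * (sg n (j + 1) * DD n j) * sg n (j + 2)
        calc sg n (j + 1) * (sg n (j + 2) * (sg n (j + 1) * DD n j))
            = sg n (j + 1) * sg n (j + 2) * sg n (j + 1) * DD n j := by
              rw [mul_assoc, mul_assoc]
          _ = sg n (j + 2) * sg n (j + 1) * sg n (j + 2) * DD n j := by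
              rw [sg_braid (show j + 1 + 1 < n - 1 by omega)]
          _ = sg n (j + 2) * sg n (j + 1) * (DD n j * sg n (j + 2)) := by
              rw [mul_assoc (sg n (j + 2) * sg n (j + 1)), Dcomm j (j + 2) (by omega)]
          _ = sg n (j + 2) * (sg n (j + 1) * DD n j) * sg n (j + 2) := by
              rw [mul_assoc, mul_assoc, mul_assoc]

/-- Key lemma: for `i < k`, `σ_{i+1} · A_k = A_k · σ_i`. -/
lemma sA {n : ℕ} : ∀ k, k < n - 1 → ∀ i, i < k → sg n (i + 1) * AA n k = AA n k * sg n i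
  | 0, _, i, hi => absurd hi (by omega)
  | k + 1, hk, i, hi => by
    rcases Nat.lt_or_ge i k with hik | hik
    · show sg n (i + 1) * (AA n k * sg n (k + 1)) = AA n k * sg n (k + 1) * sg n i
      rw [← mul_assoc, sA k (by omega) i hik, mul_assoc,
        sg_comm (show i + 2 ≤ k + 1 by omega), ← mul_assoc]
    · have hik : i = k := by omega
      subst hik
      cases i with
      | zero =>
        show sg n 1 * (sg n 0 * sg n 1) = sg n 0 * sg n 1 * sg n 0
        rw [← mul_assoc]
        exact (sg_braid (by omega)).symm
      | succ j =>
        show sg n (j + 2) * (AA n j * sg n (j + 1) * sg n (j + 2))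
          = AA n j * sg n (j + 1) * sg n (j + 2) * sg n (j + 1)
        calc sg n (j + 2) * (AA n j * sg n (j + 1) * sg n (j + 2))
            = sg n (j + 2) * AA n j * (sg n (j + 1) * sg n (j + 2)) := by
              rw [mul_assoc, ← mul_assoc (sg n (j+2))]
          _ = AA n j * (sg n (j + 2) * (sg n (j + 1) * sg n (j + 2))) := by
              rw [Acomm j (j + 2) (by omega), mul_assoc]
          _ = AA n j * (sg n (j + 1) * sg n (j + 2) * sg n (j + 1)) := by
              rw [← mul_assoc (sg n (j+2)), ← sg_braid (show j + 1 + 1 < n - 1 by omega),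
                mul_assoc]
          _ = AA n j * sg n (j + 1) * sg n (j + 2) * sg n (j + 1) := by
              rw [← mul_assoc, ← mul_assoc]

/-- `Δ_k D_k = A_k Δ_k`. -/
lemma DelD_eq_ADel {n : ℕ} : ∀ k, Del n k * DD n k = AA n k * Del n k
  | 0 => by simp [Del, DD, AA]
  | k + 1 => by
    show Del n k * DD n k * (sg n (k + 1) * DD n k)
      = AA n k * sg n (k + 1) * (Del n k * DD n k)
    calc Del n k * DD n k * (sg n (k + 1) * DD n k)
        = AA n k * Del n k * (sg n (k + 1) * DD n k) := by rw [DelD_eq_ADel k]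
      _ = AA n k * (Del n k * sg n (k + 1)) * DD n k := by
          rw [mul_assoc (AA n k), ← mul_assoc (Del n k), ← mul_assoc]
      _ = AA n k * sg n (k + 1) * (Del n k * DD n k) := by
          rw [← DelComm k (k + 1) (by omega), ← mul_assoc, mul_assoc]

/-- The reversal property: `σ_i Δ_k = Δ_k σ_{k-1-i}` for `i < k ≤ n-1`. -/
lemma rev {n : ℕ} : ∀ k, k ≤ n - 1 → ∀ i, i < k →
    sg n i * Del n k = Del n k * sg n (k - 1 - i)
  | 0, _, i, hi => absurd hi (by omega)
  | k + 1, hk, i, hi => by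
    rcases Nat.lt_or_ge i k with hik | hik
    · show sg n i * (Del n k * DD n k) = Del n k * DD n k * sg n (k + 1 - 1 - i)
      have e1 : k + 1 - 1 - i = (k - 1 - i) + 1 := by omega
      rw [e1, ← mul_assoc, rev k (by omega) i hik, mul_assoc,
        sD k (by omega) (k - 1 - i) (by omega), ← mul_assoc]
    · have hik : i = k := by omega
      subst hik
      have e0 : i + 1 - 1 - i = 0 := by omega
      rw [e0]
      cases i with
      | zero =>
        show sg n 0 * (Del n 0 * DD n 0) = Del n 0 * DD n 0 * sg n 0
        simp [Del, DD]
      | succ j =>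
        show sg n (j + 1) * (Del n (j + 1) * DD n (j + 1))
          = Del n (j + 1) * DD n (j + 1) * sg n 0
        have e2 : j + 1 - 1 - j = 0 := by omega
        calc sg n (j + 1) * (Del n (j + 1) * DD n (j + 1))
            = sg n (j + 1) * (AA n (j + 1) * Del n (j + 1)) := by rw [DelD_eq_ADel]
          _ = sg n (j + 1) * AA n (j + 1) * Del n (j + 1) := by rw [mul_assoc]
          _ = AA n (j + 1) * sg n j * Del n (j + 1) := by
              rw [sA (j + 1) (by omega) j (by omega)]
          _ = AA n (j + 1) * (Del n (j + 1) * sg n (j + 1 - 1 - j)) := by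
              rw [mul_assoc, rev (j + 1) (by omega) j (by omega)]
          _ = Del n (j + 1) * DD n (j + 1) * sg n 0 := by
              rw [e2, ← mul_assoc, ← DelD_eq_ADel]

/-- `Δ_k` starts with any generator `σ_i`, `i < k`. -/
lemma starts {n : ℕ} : ∀ k, k ≤ n - 1 → ∀ i, i < k →
    ∃ Q ∈ Submonoid.closure (Set.range (braidGen (n := n))), Del n k = sg n i * Q
  | 0, _, i, hi => absurd hi (by omega)
  | k + 1, hk, i, hi => by
    rcases Nat.lt_or_ge i k with hik | hik
    · obtain ⟨Q, hQ, hQe⟩ := starts (n := n) k (show k ≤ n - 1 by omega) i hik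
      exact ⟨Q * DD n k, mul_mem hQ (DD_pos k),
        by show Del n k * DD n k = _; rw [hQe, mul_assoc]⟩
    · have hik : i = k := by omega
      subst hik
      refine ⟨Del n i * EE n i, mul_mem (Del_pos i) (EE_pos i), ?_⟩
      have h1 : sg n i * Del n (i + 1) = Del n (i + 1) * sg n 0 := by
        have h := rev (n := n) (i + 1) hk i (by omega)
        have e : i + 1 - 1 - i = 0 := by omega
        rwa [e] at h
      have h2 : Del n (i + 1) = Del n i * (EE n i * sg n 0) := by
        show Del n i * DD n i = _
        rw [DD_eq_EE]
      calc Del n (i + 1) = sg n i * Del n (i + 1) * (sg n 0)⁻¹ := by rw [h1]; group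
        _ = sg n i * (Del n i * EE n i) := by rw [h2]; group

/-- `Δ_k` ends with any generator `σ_i`, `i < k`. -/
lemma ends {n : ℕ} (k : ℕ) (hk : k ≤ n - 1) (i : ℕ) (hi : i < k) :
    ∃ Q ∈ Submonoid.closure (Set.range (braidGen (n := n))), Del n k = Q * sg n i := by
  obtain ⟨Q, hQ, hQe⟩ := starts k hk (k - 1 - i) (by omega)
  refine ⟨Q, hQ, ?_⟩
  have h1 : sg n (k - 1 - i) * Del n k = Del n k * sg n i := by
    have h := rev k hk (k - 1 - i) (by omega)
    have e : k - 1 - (k - 1 - i) = i := by omega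
    rwa [e] at h
  calc Del n k = sg n (k - 1 - i) * Q := hQe
    _ = (sg n (k - 1 - i))⁻¹ * (sg n (k - 1 - i) * (sg n (k - 1 - i) * Q)) := by group
    _ = (sg n (k - 1 - i))⁻¹ * (sg n (k - 1 - i) * Del n k) := by rw [← hQe]
    _ = (sg n (k - 1 - i))⁻¹ * (Del n k * sg n i) := by rw [h1]
    _ = (sg n (k - 1 - i))⁻¹ * (sg n (k - 1 - i) * Q * sg n i) := by rw [hQe]
    _ = Q * sg n i := by group

/-- Conjugation by Δ sends positive elements to positive elements. -/
lemma conj_pos {n : ℕ} {P : BraidGroup n}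
    (hP : P ∈ Submonoid.closure (Set.range (braidGen (n := n)))) :
    Del n (n - 1) * P * (Del n (n - 1))⁻¹ ∈
      Submonoid.closure (Set.range (braidGen (n := n))) := by
  induction hP using Submonoid.closure_induction with
  | mem x hx =>
    obtain ⟨a, rfl⟩ := hx
    rw [braidGen_eq_sg]
    have ha : a.val < n - 1 := a.isLt
    have h1 : sg n (n - 1 - 1 - a.val) * Del n (n - 1) = Del n (n - 1) * sg n a.val := by
      have h := rev (n := n) (n - 1) le_rfl (n - 1 - 1 - a.val) (by omega)
      have e : n - 1 - 1 - (n - 1 - 1 - a.val) = a.val := by omega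
      rwa [e] at h
    have : Del n (n - 1) * sg n a.val * (Del n (n - 1))⁻¹ = sg n (n - 1 - 1 - a.val) := by
      rw [← h1]; group
    rw [this]
    exact sg_pos _
  | one => simpa using one_mem _
  | mul x y hx hy px py =>
    have : Del n (n - 1) * (x * y) * (Del n (n - 1))⁻¹
        = (Del n (n - 1) * x * (Del n (n - 1))⁻¹) * (Del n (n - 1) * y * (Del n (n - 1))⁻¹) := by
      group
    rw [this]
    exact mul_mem px py

lemma conj_pos' {n : ℕ} {P : BraidGroup n}
    (hP : P ∈ Submonoid.closure (Set.range (braidGen (n := n)))) :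
    (Del n (n - 1))⁻¹ * P * Del n (n - 1) ∈
      Submonoid.closure (Set.range (braidGen (n := n))) := by
  induction hP using Submonoid.closure_induction with
  | mem x hx =>
    obtain ⟨a, rfl⟩ := hx
    rw [braidGen_eq_sg]
    have ha : a.val < n - 1 := a.isLt
    have h1 : sg n a.val * Del n (n - 1) = Del n (n - 1) * sg n (n - 1 - 1 - a.val) :=
      rev (n - 1) le_rfl a.val ha
    have : (Del n (n - 1))⁻¹ * sg n a.val * Del n (n - 1) = sg n (n - 1 - 1 - a.val) := by
      rw [mul_assoc, h1]; group
    rw [this]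
    exact sg_pos _
  | one => simpa using one_mem _
  | mul x y hx hy px py =>
    have : (Del n (n - 1))⁻¹ * (x * y) * Del n (n - 1)
        = ((Del n (n - 1))⁻¹ * x * Del n (n - 1)) * ((Del n (n - 1))⁻¹ * y * Del n (n - 1)) := by
      group
    rw [this]
    exact mul_mem px py

lemma conj_pos_zpow {n : ℕ} (t : ℤ) {P : BraidGroup n}
    (hP : P ∈ Submonoid.closure (Set.range (braidGen (n := n)))) :
    Del n (n - 1) ^ t * P * Del n (n - 1) ^ (-t) ∈
      Submonoid.closure (Set.range (braidGen (n := n))) := by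
  obtain ⟨k, rfl | rfl⟩ := Int.eq_nat_or_neg t
  · induction k with
    | zero => simpa using hP
    | succ j ih =>
      have : Del n (n - 1) ^ ((j : ℤ) + 1) * P * Del n (n - 1) ^ (-((j : ℤ) + 1))
          = Del n (n - 1) * (Del n (n - 1) ^ (j : ℤ) * P * Del n (n - 1) ^ (-(j : ℤ)))
            * (Del n (n - 1))⁻¹ := by
        group
      push_cast
      rw [this]
      exact conj_pos ih
  · induction k with
    | zero => simpa using hP
    | succ j ih =>
      have : Del n (n - 1) ^ (-((j : ℤ) + 1)) * P * Del n (n - 1) ^ (-(-((j : ℤ) + 1)))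
          = (Del n (n - 1))⁻¹ * (Del n (n - 1) ^ (-(j : ℤ)) * P * Del n (n - 1) ^ (-(-(j : ℤ))))
            * Del n (n - 1) := by
        group
      push_cast
      rw [this]
      exact conj_pos' ih

/-- Inverse of a positive element has Garside form with nonpositive power. -/
lemma inv_pos {n : ℕ} {P : BraidGroup n}
    (hP : P ∈ Submonoid.closure (Set.range (braidGen (n := n)))) :
    ∃ (c : ℕ) (Q : BraidGroup n), Q ∈ Submonoid.closure (Set.range (braidGen (n := n))) ∧
      P⁻¹ = Del n (n - 1) ^ (-(c : ℤ)) * Q := by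
  induction hP using Submonoid.closure_induction with
  | mem x hx =>
    obtain ⟨a, rfl⟩ := hx
    obtain ⟨Q, hQ, hQe⟩ := ends (n := n) (n - 1) le_rfl a.val a.isLt
    refine ⟨1, Q, hQ, ?_⟩
    rw [braidGen_eq_sg]
    simp only [Nat.cast_one, zpow_neg, zpow_one]
    rw [hQe]
    group
  | one => exact ⟨0, 1, one_mem _, by simp⟩
  | mul x y hx hy px py =>
    obtain ⟨c₁, Q₁, hQ₁, he₁⟩ := px
    obtain ⟨c₂, Q₂, hQ₂, he₂⟩ := py
    refine ⟨c₁ + c₂, (Del n (n - 1) ^ (c₁ : ℤ) * Q₂ * Del n (n - 1) ^ (-(c₁ : ℤ))) * Q₁,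
      mul_mem (conj_pos_zpow (c₁ : ℤ) hQ₂) hQ₁, ?_⟩
    have : (x * y)⁻¹ = y⁻¹ * x⁻¹ := by group
    rw [this, he₁, he₂]
    have e : ((c₁ : ℕ) + (c₂ : ℕ) : ℤ) = (c₁ : ℤ) + (c₂ : ℤ) := by push_cast; ring
    rw [show (-(((c₁ + c₂ : ℕ)) : ℤ)) = -(c₁ : ℤ) + -(c₂ : ℤ) by push_cast; ring]
    group

/-- Identify `braidDelta` with `Del`. -/
lemma mk_descending {n : ℕ} : ∀ (k : ℕ) (f : Fin (k + 1) → Fin (n - 1)),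
    (∀ j, (f j).val = k - j.val) →
    PresentedGroup.mk (braidRels (n - 1))
      ((List.ofFn (fun j => FreeGroup.of (f j))).prod) = DD n k
  | 0, f, hf => by
    have : (f 0).val = 0 := by simpa using hf 0
    simp only [List.ofFn_succ, List.ofFn_zero, List.prod_cons, List.prod_nil, mul_one]
    show braidGen (f 0) = DD n 0
    rw [braidGen_eq_sg, this]
    rfl
  | k + 1, f, hf => by
    rw [List.ofFn_succ, List.prod_cons, map_mul]
    have h0 : (f 0).val = k + 1 := by simpa using hf 0
    have hhead : PresentedGroup.mk (braidRels (n - 1)) (FreeGroup.of (f 0)) = sg n (k + 1) := by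
      show braidGen (f 0) = sg n (k + 1)
      rw [braidGen_eq_sg, h0]
    have htail := mk_descending k (fun j => f j.succ) (fun j => by
      show (f j.succ).val = k - j.val
      have := hf j.succ
      simp only [Fin.val_succ] at this
      omega)
    show _ * PresentedGroup.mk (braidRels (n - 1))
        ((List.ofFn (fun j : Fin (k + 1) => FreeGroup.of (f j.succ))).prod) = DD n (k + 1)
    rw [hhead, htail]
    rfl

lemma mk_outer {n : ℕ} : ∀ (t : ℕ) (g : Fin t → FreeGroup (Fin (n - 1))),
    (∀ k, PresentedGroup.mk (braidRels (n - 1)) (g k) = DD n k.val) →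
    PresentedGroup.mk (braidRels (n - 1)) ((List.ofFn g).prod) = Del n t
  | 0, g, hg => by simp [Del]
  | t + 1, g, hg => by
    rw [List.ofFn_succ', List.concat_eq_append, List.prod_append, map_mul]
    have hfront := mk_outer t (fun k => g k.castSucc) (fun k => by
      simpa using hg k.castSucc)
    rw [hfront]
    simp only [List.prod_cons, List.prod_nil, mul_one]
    rw [hg (Fin.last t)]
    rfl

lemma braidDelta_eq {n : ℕ} : braidDelta n = Del n (n - 1) := by
  unfold braidDelta deltaFree
  exact mk_outer (n - 1) _ (fun k => mk_descending k.val _ (fun j => rfl))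

end BraidAux

open BraidAux in
theorem braid_garside_form (n : ℕ) (b : BraidGroup n) :
    ∃ (r : ℤ) (P : BraidGroup n),
      P ∈ Submonoid.closure (Set.range (braidGen (n := n))) ∧
      b = braidDelta n ^ r * P := by
  rw [braidDelta_eq]
  have hb : b ∈ Subgroup.closure (Set.range (PresentedGroup.of :
      Fin (n - 1) → BraidGroup n)) := by
    rw [PresentedGroup.closure_range_of]
    trivial
  induction hb using Subgroup.closure_induction with
  | mem x hx =>
    obtain ⟨a, rfl⟩ := hx
    exact ⟨0, braidGen a, Submonoid.subset_closure ⟨a, rfl⟩, by simp; rfl⟩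
  | one => exact ⟨0, 1, one_mem _, by simp⟩
  | mul x y hx hy px py =>
    obtain ⟨r, P, hP, rfl⟩ := px
    obtain ⟨t, Q, hQ, rfl⟩ := py
    refine ⟨r + t, (Del n (n - 1) ^ (-t) * P * Del n (n - 1) ^ t) * Q,
      mul_mem (by simpa using conj_pos_zpow (-t) hP) hQ, ?_⟩
    group
  | inv x hx px =>
    obtain ⟨r, P, hP, rfl⟩ := px
    obtain ⟨c, Q, hQ, hQe⟩ := inv_pos hP
    refine ⟨-(c : ℤ) - r, (Del n (n - 1) ^ r * Q * Del n (n - 1) ^ (-r)), by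
      simpa using conj_pos_zpow r hQ, ?_⟩
    have : (Del n (n - 1) ^ r * P)⁻¹ = P⁻¹ * Del n (n - 1) ^ (-r) := by group
    rw [this, hQe]
    group
end

section
/- For each i with 1 ≤ i ≤ n-1, the element Δₙ·σᵢ⁻¹ of the braid group Bₙ is a positive braid, i.e. σᵢ⁻¹ = Δₙ⁻¹·wᵢ for some positive braid word wᵢ. -/
namespace BraidAux

variable {n : ℕ}

/-- generator, as a function of a natural index (junk value `1` out of range) -/
def s (n : ℕ) (j : ℕ) : BraidGroup n :=
  if h : j < n - 1 then braidGen ⟨j, h⟩ else 1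

lemma s_eq {j : ℕ} (h : j < n - 1) : s n j = braidGen (⟨j, h⟩ : Fin (n-1)) := dif_pos h

lemma mk_rel {m : ℕ} {r : FreeGroup (Fin m)} (h : r ∈ braidRels m) :
    PresentedGroup.mk (braidRels m) r = 1 :=
  (QuotientGroup.eq_one_iff _).mpr (Subgroup.subset_normalClosure h)

lemma rel_comm {a b : ℕ} (hab : a + 2 ≤ b) (hb : b < n - 1) :
    s n a * s n b = s n b * s n a := by
  have ha : a < n - 1 := by omega
  have h1 : (PresentedGroup.mk (braidRels (n-1))
      (FreeGroup.of (⟨a, ha⟩ : Fin (n-1)) * FreeGroup.of (⟨b, hb⟩ : Fin (n-1)) *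
        (FreeGroup.of (⟨a, ha⟩ : Fin (n-1)))⁻¹ *
        (FreeGroup.of (⟨b, hb⟩ : Fin (n-1)))⁻¹)) = 1 :=
    mk_rel (Or.inl ⟨⟨a, ha⟩, ⟨b, hb⟩, hab, rfl⟩)
  rw [s_eq ha, s_eq hb]
  simp only [map_mul, map_inv] at h1
  have h1' : braidGen (⟨a, ha⟩ : Fin (n-1)) * braidGen ⟨b, hb⟩ *
      (braidGen (⟨a, ha⟩ : Fin (n-1)))⁻¹ * (braidGen ⟨b, hb⟩)⁻¹ = 1 := h1
  set x := braidGen (⟨a, ha⟩ : Fin (n-1))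
  set y := braidGen (⟨b, hb⟩ : Fin (n-1))
  have : x * y * y⁻¹ = y * x * y⁻¹ := by
    calc x * y * y⁻¹ = (x * y * x⁻¹ * y⁻¹) * (y * x * y⁻¹) := by group
    _ = y * x * y⁻¹ := by rw [h1']; group
  calc x * y = x * y * y⁻¹ * y := by group
  _ = y * x * y⁻¹ * y := by rw [this]
  _ = y * x := by group

lemma rel_braid {a : ℕ} (hb : a + 1 < n - 1) :
    s n a * s n (a+1) * s n a = s n (a+1) * s n a * s n (a+1) := by
  have ha : a < n - 1 := by omega
  have h1 : (PresentedGroup.mk (braidRels (n-1))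
      (FreeGroup.of (⟨a, ha⟩ : Fin (n-1)) * FreeGroup.of (⟨a+1, hb⟩ : Fin (n-1)) *
        FreeGroup.of (⟨a, ha⟩ : Fin (n-1)) *
        (FreeGroup.of (⟨a+1, hb⟩ : Fin (n-1)) * FreeGroup.of (⟨a, ha⟩ : Fin (n-1)) *
          FreeGroup.of (⟨a+1, hb⟩ : Fin (n-1)))⁻¹)) = 1 :=
    mk_rel (Or.inr ⟨⟨a, ha⟩, ⟨a+1, hb⟩, rfl, rfl⟩)
  rw [s_eq ha, s_eq hb]
  simp only [map_mul, map_inv] at h1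
  have h1' : braidGen (⟨a, ha⟩ : Fin (n-1)) * braidGen ⟨a+1, hb⟩ *
      braidGen (⟨a, ha⟩ : Fin (n-1)) *
      (braidGen (⟨a+1, hb⟩ : Fin (n-1)) * braidGen ⟨a, ha⟩ * braidGen ⟨a+1, hb⟩)⁻¹ = 1 := h1
  rw [mul_inv_eq_one] at h1'
  exact h1'

/-- descending run σ_k σ_{k-1} ⋯ σ_0 -/
def rho (n : ℕ) : ℕ → BraidGroup n
  | 0 => s n 0
  | k+1 => s n (k+1) * rho n k

/-- tail of the run without the final σ_0 -/
def tau (n : ℕ) : ℕ → BraidGroup n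
  | 0 => 1
  | k+1 => s n (k+1) * tau n k

lemma rho_eq_tau (k : ℕ) : rho n k = tau n k * s n 0 := by
  induction k with
  | zero => simp [rho, tau]
  | succ k ih => rw [rho, tau, ih, mul_assoc]

/-- the partial product D r = ρ₀ ρ₁ ⋯ ρ_{r-1} -/
def D (n : ℕ) : ℕ → BraidGroup n
  | 0 => 1
  | r+1 => D n r * rho n r

abbrev M (n : ℕ) : Submonoid (BraidGroup n) :=
  Submonoid.closure (Set.range (braidGen (n := n)))

lemma s_mem {j : ℕ} (h : j < n - 1) : s n j ∈ M n := by
  rw [s_eq h]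
  exact Submonoid.subset_closure ⟨_, rfl⟩

lemma rho_mem {k : ℕ} (h : k < n - 1) : rho n k ∈ M n := by
  induction k with
  | zero => exact s_mem h
  | succ k ih => exact mul_mem (s_mem h) (ih (by omega))

lemma tau_mem {k : ℕ} (h : k < n - 1) : tau n k ∈ M n := by
  induction k with
  | zero => exact one_mem _
  | succ k ih => exact mul_mem (s_mem h) (ih (by omega))

lemma D_mem {r : ℕ} (h : r ≤ n - 1) : D n r ∈ M n := by
  induction r with
  | zero => exact one_mem _
  | succ r ih => exact mul_mem (ih (by omega)) (rho_mem (by omega))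

/-- a generator of much larger index commutes with a run -/
lemma comm_rho : ∀ t j : ℕ, t + 2 ≤ j → j < n - 1 →
    rho n t * s n j = s n j * rho n t := by
  intro t
  induction t with
  | zero => intro j h hj; exact rel_comm h hj
  | succ t ih =>
      intro j h hj
      rw [rho, mul_assoc, ih j (by omega) hj, ← mul_assoc,
        rel_comm (by omega) hj, mul_assoc]

/-- key lemma: σ_{j-1}·ρ_k = ρ_k·σ_j for 1 ≤ j ≤ k -/
lemma shift : ∀ k j : ℕ, 1 ≤ j → j ≤ k → k < n - 1 →
    rho n k * s n j = s n (j-1) * rho n k := by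
  intro k
  induction k with
  | zero => intro j h1 h2 _; omega
  | succ k ih =>
      intro j h1 h2 hk
      rcases Nat.lt_or_ge j (k+1) with hj | hj
      · -- j ≤ k : use IH and commutation
        rw [rho, mul_assoc, ih j h1 (by omega) (by omega), ← mul_assoc,
          ← rel_comm (a := j-1) (b := k+1) (by omega) hk, mul_assoc]
      · -- j = k+1
        have hj' : j = k + 1 := by omega
        subst hj'
        cases k with
        | zero =>
            have hb := rel_braid (n := n) (a := 0) hk
            show s n 1 * s n 0 * s n 1 = s n (1-1) * (s n 1 * s n 0)
            rw [show (1:ℕ) - 1 = 0 from rfl, ← hb, mul_assoc]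
        | succ t =>
            have hc : rho n t * s n (t+2) = s n (t+2) * rho n t :=
              comm_rho t (t+2) (by omega) (by omega)
            have hb := rel_braid (n := n) (a := t+1) (by omega)
            simp only [show t+1+1 = t+2 from rfl] at hb ⊢
            show s n (t+2) * (s n (t+1) * rho n t) * s n (t+2)
                = s n (t+2-1) * (s n (t+2) * (s n (t+1) * rho n t))
            rw [show t+2-1 = t+1 from rfl]
            calc s n (t+2) * (s n (t+1) * rho n t) * s n (t+2)
                = s n (t+2) * s n (t+1) * (rho n t * s n (t+2)) := by group
              _ = s n (t+2) * s n (t+1) * (s n (t+2) * rho n t) := by rw [hc]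
              _ = s n (t+2) * s n (t+1) * s n (t+2) * rho n t := by group
              _ = s n (t+1) * s n (t+2) * s n (t+1) * rho n t := by rw [← hb]
              _ = s n (t+1) * (s n (t+2) * (s n (t+1) * rho n t)) := by group

/-- Δ (truncated to the first r runs) ends in σ_i, for every i < r -/
lemma delta_ends : ∀ r : ℕ, r ≤ n - 1 → ∀ i : ℕ, i < r →
    ∃ w ∈ M n, D n r = w * s n i := by
  intro r
  induction r with
  | zero => intro _ i hi; omega
  | succ r ih =>
      intro hr i hi
      cases i with
      | zero =>
          refine ⟨D n r * tau n r, mul_mem (D_mem (by omega)) (tau_mem (by omega)), ?_⟩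
          show D n r * rho n r = _
          rw [rho_eq_tau, ← mul_assoc]
      | succ j =>
          obtain ⟨w, hw, hD⟩ := ih (by omega) j (by omega)
          refine ⟨w * rho n r, mul_mem hw (rho_mem (by omega)), ?_⟩
          show D n r * rho n r = _
          rw [hD, mul_assoc, mul_assoc]
          congr 1
          have hs : rho n r * s n (j+1) = s n (j+1-1) * rho n r :=
            shift r (j+1) (by omega) (by omega) (by omega)
          rw [show j+1-1 = j from rfl] at hs
          exact hs.symm

lemma inner_eq : ∀ k : ℕ, k < n - 1 →
    (List.ofFn fun j : Fin (k+1) => s n (k - j.val)).prod = rho n k := by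
  intro k
  induction k with
  | zero => intro _; simp [rho]
  | succ k ih =>
      intro hk
      rw [List.ofFn_succ, List.prod_cons]
      have hfun : (fun j : Fin (k+1) => s n (k + 1 - (Fin.succ j).val)) =
          (fun j : Fin (k+1) => s n (k - j.val)) := by
        funext j
        congr 1
        simp only [Fin.val_succ]
        omega
      rw [hfun, ih (by omega)]
      simp [rho]

lemma mk_inner (k : Fin (n-1)) :
    PresentedGroup.mk (braidRels (n-1)) ((List.ofFn (fun j : Fin (k.val + 1) =>
      FreeGroup.of (⟨k.val - j.val, Nat.lt_of_le_of_lt (Nat.sub_le _ _) k.isLt⟩ : Fin (n-1)))).prod)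
      = rho n k.val := by
  rw [map_list_prod, List.map_ofFn, ← inner_eq k.val k.isLt]
  congr 1
  congr 1
  funext j
  exact (s_eq (Nat.lt_of_le_of_lt (Nat.sub_le _ _) k.isLt)).symm

lemma D_eq_ofFn : ∀ r : ℕ, (List.ofFn fun k : Fin r => rho n k.val).prod = D n r := by
  intro r
  induction r with
  | zero => simp [D]
  | succ r ih =>
      rw [List.ofFn_succ', List.concat_eq_append, List.prod_append]
      simp only [Fin.coe_castSucc, Fin.val_last, List.prod_cons, List.prod_nil, mul_one]
      rw [ih]
      rfl

lemma delta_eq : braidDelta n = D n (n - 1) := by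
  show PresentedGroup.mk (braidRels (n-1)) (deltaFree (n-1)) = _
  unfold deltaFree
  rw [map_list_prod, List.map_ofFn, ← D_eq_ofFn]
  congr 1
  congr 1
  funext k
  exact mk_inner k

end BraidAux

theorem braid_delta_mul_gen_inv_positive (n : ℕ) (i : Fin (n - 1)) :
    braidDelta n * (braidGen i)⁻¹ ∈ Submonoid.closure (Set.range (braidGen (n := n))) := by
  obtain ⟨w, hw, hD⟩ := BraidAux.delta_ends (n := n) (n-1) le_rfl i.val i.isLt
  have hΔ : braidDelta n = w * braidGen i := by
    rw [BraidAux.delta_eq, hD, BraidAux.s_eq i.isLt, Fin.eta]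
  rw [hΔ, mul_inv_cancel_right]
  exact hw
end
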